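/- arXiv:2604.19336 — 3 statements merged into one kernel-verified Lean document; each statement's English description precedes it below -/
import Mathlib

section
/- (Progress per iteration.) Let f_1,…,f_M : ℝ^d → ℝ each be L-smooth with average f = (1/M)∑_{m=1}^M f_m, and let x̄^* be a global minimizer of f over ℝ^d. Let x_1,…,x_M ∈ ℝ^d be arbitrary points with average x̄ = (1/M)∑_m x_m and consensus error V = (1/M)∑_m ‖x_m − x̄‖². Let ξ_1,…,ξ_M be independent random samples (values in a measurable space S) and G : ℝ^d × S → ℝ^d a measurable map such that for every x ∈ ℝ^d and every m: E[G(x, ξ_m)] = ∇f_m(x) and E‖G(x, ξ_m) − ∇f_m(x)‖² ≤ σ_m² < ∞. Then E‖(1/M)∑_{m=1}^M G(x_m, ξ_m)‖² ≤ (10/M²)∑_{m=1}^M σ_m² + 2L²·V + 4L·(f(x̄) − f(x̄^*)). -/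
/-!
Centre each stochastic gradient at its mean `∇fₘ(xₘ)`. Independence kills the cross terms, so the
second moment of the averaged estimator is `(1/M²)∑ₘ E‖G(xₘ, ξₘ) − ∇fₘ(xₘ)‖²` plus the squared norm
of the mean direction `(1/M)∑ₘ ∇fₘ(xₘ)`. Split that direction into the drift
`(1/M)∑ₘ (∇fₘ(xₘ) − ∇fₘ(x̄))`, whose square is at most `L²V` by the Lipschitz gradients and Jensen,
and `(1/M)∑ₘ ∇fₘ(x̄)`. Averaging the descent lemmas of the `fₘ` gives `F` a quadratic majorant at
`x̄` with this slope, and evaluating it at `x̄ − L⁻¹·slope` against the minimum `F(x̄*)` bounds its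
square by `2L(F(x̄) − F(x̄*))`.
-/

open MeasureTheory ProbabilityTheory Finset
open scoped RealInnerProductSpace NNReal

section Norm

variable {E : Type*} [SeminormedAddCommGroup E]

theorem norm_add_sq_le_two_mul (a b : E) : ‖a + b‖ ^ 2 ≤ 2 * ‖a‖ ^ 2 + 2 * ‖b‖ ^ 2 := by
  nlinarith [norm_add_le a b, norm_nonneg (a + b), sq_nonneg (‖a‖ - ‖b‖)]

theorem norm_average_sq_le [NormedSpace ℝ E] {ι : Type*} [Fintype ι] (a : ι → E) :
    ‖(Fintype.card ι : ℝ)⁻¹ • ∑ i, a i‖ ^ 2 ≤ (Fintype.card ι : ℝ)⁻¹ * ∑ i, ‖a i‖ ^ 2 := by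
  have hcs : (∑ i, ‖a i‖) ^ 2 ≤ Fintype.card ι * ∑ i, ‖a i‖ ^ 2 := by
    simpa using sq_sum_le_card_mul_sum_sq (s := univ) (f := fun i => ‖a i‖)
  calc ‖(Fintype.card ι : ℝ)⁻¹ • ∑ i, a i‖ ^ 2
      ≤ (Fintype.card ι : ℝ)⁻¹ ^ 2 * (∑ i, ‖a i‖) ^ 2 := by
        rw [norm_smul, Real.norm_of_nonneg (by positivity), mul_pow]
        gcongr
        exact norm_sum_le _ _
    _ ≤ (Fintype.card ι : ℝ)⁻¹ ^ 2 * (Fintype.card ι * ∑ i, ‖a i‖ ^ 2) :=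
        mul_le_mul_of_nonneg_left hcs (by positivity)
    _ = (Fintype.card ι : ℝ)⁻¹ * ((Fintype.card ι : ℝ)⁻¹ * Fintype.card ι * ∑ i, ‖a i‖ ^ 2) := by
        ring
    _ ≤ (Fintype.card ι : ℝ)⁻¹ * ∑ i, ‖a i‖ ^ 2 := by
        gcongr
        exact mul_le_of_le_one_left (by positivity)
          (inv_mul_le_one_of_le₀ le_rfl (Nat.cast_nonneg _))

end Norm

section Smooth

variable {E : Type*} [NormedAddCommGroup E] [InnerProductSpace ℝ E]

theorem le_add_inner_add_sq_of_lipschitzWith_gradient [CompleteSpace E] {h : E → ℝ} {K : ℝ≥0}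
    (hd : Differentiable ℝ h) (hK : LipschitzWith K (gradient h)) (x y : E) :
    h y ≤ h x + ⟪gradient h x, y - x⟫ + K / 2 * ‖y - x‖ ^ 2 := by
  set v := y - x
  have hderiv (t : ℝ) :
      HasDerivAt (fun s : ℝ => h (x + s • v)) ⟪gradient h (x + t • v), v⟫ t := by
    have hline : HasDerivAt (fun s : ℝ => x + s • v) v t := by
      simpa using ((hasDerivAt_id t).smul_const v).const_add x
    have hgrad : HasFDerivAt h (InnerProductSpace.toDual ℝ E (gradient h (x + t • v)))
        (x + t • v) := (hd _).hasGradientAt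
    simpa [Function.comp_def] using hgrad.comp_hasDerivAt t hline
  have hslope (t : ℝ) (ht : 0 ≤ t) :
      ⟪gradient h (x + t • v), v⟫ ≤ ⟪gradient h x, v⟫ + K * t * ‖v‖ ^ 2 := by
    have hlip : ‖gradient h (x + t • v) - gradient h x‖ ≤ K * (t * ‖v‖) := by
      simpa [dist_eq_norm, norm_smul, abs_of_nonneg ht] using hK.dist_le_mul (x + t • v) x
    have hcs := real_inner_le_norm (gradient h (x + t • v) - gradient h x) v
    rw [inner_sub_left] at hcs
    nlinarith [norm_nonneg v]
  set a := ⟪gradient h x, v⟫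
  set q := ‖v‖ ^ 2
  have hmajorant (t : ℝ) :
      HasDerivAt (fun s => h x + s * a + K / 2 * s ^ 2 * q) (a + K * t * q) t :=
    (((hasDerivAt_id t).mul_const a).const_add (h x) |>.add
      (((hasDerivAt_pow 2 t).const_mul (K / 2 : ℝ)).mul_const q)).congr_deriv
      (by simp only [one_mul, Nat.cast_ofNat, Nat.add_one_sub_one, pow_one]; ring)
  have key := image_le_of_deriv_right_le_deriv_boundary
    (fun t _ => (hderiv t).continuousAt.continuousWithinAt)
    (fun t _ => (hderiv t).hasDerivWithinAt) (by simp) (by fun_prop)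
    (fun t _ => (hmajorant t).hasDerivWithinAt) (fun t ht => hslope t ht.1)
    (Set.right_mem_Icc.2 zero_le_one)
  simpa [v, q] using key

theorem norm_sq_le_of_le_add_inner_add_sq {h : E → ℝ} {L : ℝ} (hL : 0 < L) {x xstar g : E}
    (hmin : ∀ y, h xstar ≤ h y) (hup : ∀ y, h y ≤ h x + ⟪g, y - x⟫ + L / 2 * ‖y - x‖ ^ 2) :
    ‖g‖ ^ 2 ≤ 2 * L * (h x - h xstar) := by
  have hstep := (hmin (x - L⁻¹ • g)).trans (hup (x - L⁻¹ • g))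
  have hvalue : h x + ⟪g, x - L⁻¹ • g - x⟫ + L / 2 * ‖x - L⁻¹ • g - x‖ ^ 2
      = h x - ‖g‖ ^ 2 / (2 * L) := by
    rw [sub_sub_cancel_left, inner_neg_right, real_inner_smul_right, real_inner_self_eq_norm_sq,
      norm_neg, norm_smul, Real.norm_of_nonneg (inv_nonneg.2 hL.le)]
    field_simp
    ring
  rw [hvalue, le_sub_comm, div_le_iff₀ (by positivity)] at hstep
  linarith

variable [CompleteSpace E] {ι : Type*} [Fintype ι] {K : ℝ≥0} {f : ι → E → ℝ}

theorem average_le_add_inner_add_sq (hdiff : ∀ i, Differentiable ℝ (f i))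
    (hsmooth : ∀ i, LipschitzWith K (gradient (f i))) (x y : E) :
    (Fintype.card ι : ℝ)⁻¹ * ∑ i, f i y
      ≤ (Fintype.card ι : ℝ)⁻¹ * ∑ i, f i x
        + ⟪(Fintype.card ι : ℝ)⁻¹ • ∑ i, gradient (f i) x, y - x⟫ + K / 2 * ‖y - x‖ ^ 2 := by
  set c : ℝ := (Fintype.card ι : ℝ)⁻¹
  -- only `≤`: for empty `ι` the product is `0⁻¹ * 0 = 0`
  have hc : c * Fintype.card ι ≤ 1 := inv_mul_le_one_of_le₀ le_rfl (Nat.cast_nonneg _)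
  calc c * ∑ i, f i y
      ≤ c * ∑ i, (f i x + ⟪gradient (f i) x, y - x⟫ + K / 2 * ‖y - x‖ ^ 2) := by
        gcongr with i
        exact le_add_inner_add_sq_of_lipschitzWith_gradient (hdiff i) (hsmooth i) x y
    _ = c * ∑ i, f i x + ⟪c • ∑ i, gradient (f i) x, y - x⟫
          + c * Fintype.card ι * (K / 2 * ‖y - x‖ ^ 2) := by
        simp only [sum_add_distrib, sum_const, card_univ, nsmul_eq_mul, real_inner_smul_left,
          sum_inner]
        ring
    _ ≤ c * ∑ i, f i x + ⟪c • ∑ i, gradient (f i) x, y - x⟫ + K / 2 * ‖y - x‖ ^ 2 := by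
        have := mul_le_of_le_one_left (by positivity : (0 : ℝ) ≤ K / 2 * ‖y - x‖ ^ 2) hc
        linarith

theorem norm_average_gradient_sq_le (hK : 0 < K) (hdiff : ∀ i, Differentiable ℝ (f i))
    (hsmooth : ∀ i, LipschitzWith K (gradient (f i))) {F : E → ℝ}
    (hF : ∀ z, F z = (Fintype.card ι : ℝ)⁻¹ * ∑ i, f i z) {xstar : E} (hmin : ∀ y, F xstar ≤ F y)
    (x : ι → E) (xbar : E) :
    ‖(Fintype.card ι : ℝ)⁻¹ • ∑ i, gradient (f i) (x i)‖ ^ 2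
      ≤ 2 * K ^ 2 * ((Fintype.card ι : ℝ)⁻¹ * ∑ i, ‖x i - xbar‖ ^ 2)
        + 4 * K * (F xbar - F xstar) := by
  set c : ℝ := (Fintype.card ι : ℝ)⁻¹
  have hgrad : ‖c • ∑ i, gradient (f i) xbar‖ ^ 2 ≤ 2 * K * (F xbar - F xstar) :=
    norm_sq_le_of_le_add_inner_add_sq (NNReal.coe_pos.2 hK) hmin fun y => by
      simpa only [hF] using average_le_add_inner_add_sq hdiff hsmooth xbar y
  have hdrift : ‖c • ∑ i, (gradient (f i) (x i) - gradient (f i) xbar)‖ ^ 2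
      ≤ K ^ 2 * (c * ∑ i, ‖x i - xbar‖ ^ 2) := by
    calc ‖c • ∑ i, (gradient (f i) (x i) - gradient (f i) xbar)‖ ^ 2
        ≤ c * ∑ i, ‖gradient (f i) (x i) - gradient (f i) xbar‖ ^ 2 := norm_average_sq_le _
      _ ≤ c * ∑ i, (K * ‖x i - xbar‖) ^ 2 := by
        gcongr with i
        simpa only [dist_eq_norm] using (hsmooth i).dist_le_mul (x i) xbar
      _ = K ^ 2 * (c * ∑ i, ‖x i - xbar‖ ^ 2) := by
        simp only [mul_pow, ← mul_sum]
        ring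
  calc ‖c • ∑ i, gradient (f i) (x i)‖ ^ 2
      = ‖c • ∑ i, (gradient (f i) (x i) - gradient (f i) xbar)
          + c • ∑ i, gradient (f i) xbar‖ ^ 2 := by
        rw [← smul_add, ← sum_add_distrib]
        simp only [sub_add_cancel]
    _ ≤ _ := (norm_add_sq_le_two_mul _ _).trans (by linarith)

end Smooth

section SecondMoment

variable {Ω E : Type*} [MeasurableSpace Ω] {μ : Measure Ω}
  [NormedAddCommGroup E] [InnerProductSpace ℝ E] [CompleteSpace E]

theorem integral_norm_sq_eq_integral_norm_sub_sq_add [IsProbabilityMeasure μ] {X : Ω → E}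
    (hX : MemLp X 2 μ) :
    ∫ ω, ‖X ω‖ ^ 2 ∂μ = ∫ ω, ‖X ω - ∫ ω', X ω' ∂μ‖ ^ 2 ∂μ + ‖∫ ω, X ω ∂μ‖ ^ 2 := by
  set m := ∫ ω, X ω ∂μ with hm
  have hXc : MemLp (fun ω => X ω - m) 2 μ := hX.sub (memLp_const m)
  have hsq : Integrable (fun ω => ‖X ω - m‖ ^ 2) μ :=
    (memLp_two_iff_integrable_sq_norm hXc.1).1 hXc
  have hcross : Integrable (fun ω => 2 * ⟪X ω - m, m⟫) μ :=
    ((hXc.integrable one_le_two).inner_const m).const_mul 2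
  have hcross_zero : ∫ ω, 2 * ⟪X ω - m, m⟫ ∂μ = 0 := by
    simp_rw [real_inner_comm m]
    rw [integral_const_mul, integral_inner (hXc.integrable one_le_two),
      integral_sub (hX.integrable one_le_two) (integrable_const m), ← hm]
    simp
  calc ∫ ω, ‖X ω‖ ^ 2 ∂μ = ∫ ω, (‖X ω - m‖ ^ 2 + 2 * ⟪X ω - m, m⟫ + ‖m‖ ^ 2) ∂μ := by
        simp_rw [← norm_add_sq_real, sub_add_cancel]
    _ = ∫ ω, ‖X ω - m‖ ^ 2 ∂μ + ‖m‖ ^ 2 := by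
        rw [integral_add (f := fun ω => ‖X ω - m‖ ^ 2 + 2 * ⟪X ω - m, m⟫) (hsq.add hcross)
          (integrable_const _), integral_add hsq hcross,
          hcross_zero]
        simp

variable [MeasurableSpace E] [BorelSpace E] {ι : Type*} [Fintype ι]

theorem integral_norm_sum_sq_eq_sum_integral_norm_sq [IsFiniteMeasure μ] {Y : ι → Ω → E}
    (hY : ∀ i, MemLp (Y i) 2 μ) (hmean : ∀ i, ∫ ω, Y i ω ∂μ = 0)
    (hind : Pairwise fun i j => IndepFun (Y i) (Y j) μ) :
    ∫ ω, ‖∑ i, Y i ω‖ ^ 2 ∂μ = ∑ i, ∫ ω, ‖Y i ω‖ ^ 2 ∂μ := by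
  have hint (i j : ι) : Integrable (fun ω => ⟪Y i ω, Y j ω⟫) μ :=
    memLp_one_iff_integrable.1 ((innerSL ℝ).memLp_of_bilin 1 (hY i) (hY j))
  have hcross (i j : ι) (hij : i ≠ j) : ∫ ω, ⟪Y i ω, Y j ω⟫ ∂μ = 0 := by
    have := (hind hij).integral_bilin ((hY i).integrable one_le_two)
      ((hY j).integrable one_le_two) (innerSL ℝ)
    rw [hmean, hmean, map_zero] at this
    exact this
  calc ∫ ω, ‖∑ i, Y i ω‖ ^ 2 ∂μ
      = ∑ i, ∑ j, ∫ ω, ⟪Y i ω, Y j ω⟫ ∂μ := by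
        simp_rw [← real_inner_self_eq_norm_sq, sum_inner, inner_sum]
        rw [integral_finsetSum _ fun i _ => integrable_finsetSum _ fun j _ => hint i j]
        exact sum_congr rfl fun i _ => integral_finsetSum _ fun j _ => hint i j
    _ = ∑ i, ∫ ω, ‖Y i ω‖ ^ 2 ∂μ := by
        refine sum_congr rfl fun i _ => ?_
        rw [sum_eq_single i (fun j _ hji => hcross i j hji.symm) (by simp)]
        simp_rw [real_inner_self_eq_norm_sq]

theorem integral_norm_sum_sq_eq_sum_integral_norm_sub_sq_add [IsProbabilityMeasure μ]
    {Z : ι → Ω → E} (hZ : ∀ i, MemLp (Z i) 2 μ)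
    (hind : Pairwise fun i j => IndepFun (Z i) (Z j) μ) :
    ∫ ω, ‖∑ i, Z i ω‖ ^ 2 ∂μ
      = ∑ i, ∫ ω, ‖Z i ω - ∫ ω', Z i ω' ∂μ‖ ^ 2 ∂μ + ‖∑ i, ∫ ω, Z i ω ∂μ‖ ^ 2 := by
  have hsum : MemLp (fun ω => ∑ i, Z i ω) 2 μ := memLp_finsetSum _ fun i _ => hZ i
  have hmean : ∫ ω, ∑ i, Z i ω ∂μ = ∑ i, ∫ ω, Z i ω ∂μ :=
    integral_finsetSum _ fun i _ => (hZ i).integrable one_le_two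
  have hcentered := integral_norm_sum_sq_eq_sum_integral_norm_sq
    (Y := fun i ω => Z i ω - ∫ ω', Z i ω' ∂μ)
    (fun i => (hZ i).sub (memLp_const _))
    (fun i => by simp [integral_sub ((hZ i).integrable one_le_two) (integrable_const _)])
    (fun i j hij => (hind hij).comp (measurable_id.sub_const (∫ ω', Z i ω' ∂μ))
      (measurable_id.sub_const (∫ ω', Z j ω' ∂μ)))
  rw [integral_norm_sq_eq_integral_norm_sub_sq_add hsum, hmean, ← hcentered]
  simp only [sum_sub_distrib]

end SecondMoment

theorem progress_per_iteration_general
    {d M : ℕ}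
    {Ω : Type} [MeasurableSpace Ω] (P : Measure Ω) [IsProbabilityMeasure P]
    {S : Type} [MeasurableSpace S]
    (L : ℝ) (hL : 0 < L)
    (f : Fin M → EuclideanSpace ℝ (Fin d) → ℝ)
    (hdiff : ∀ m, Differentiable ℝ (f m))
    (hsmooth : ∀ m, LipschitzWith L.toNNReal (gradient (f m)))
    (F : EuclideanSpace ℝ (Fin d) → ℝ)
    (hF : ∀ z, F z = (M : ℝ)⁻¹ * ∑ m, f m z)
    (xbarstar : EuclideanSpace ℝ (Fin d)) (hmin : ∀ y, F xbarstar ≤ F y)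
    (x : Fin M → EuclideanSpace ℝ (Fin d))
    (xbar : EuclideanSpace ℝ (Fin d))
    (V : ℝ) (hV : V = (M : ℝ)⁻¹ * ∑ m, ‖x m - xbar‖ ^ 2)
    (ξ : Fin M → Ω → S)
    (hindep : iIndepFun ξ P)
    (G : EuclideanSpace ℝ (Fin d) → S → EuclideanSpace ℝ (Fin d))
    (hG : Measurable (Function.uncurry G))
    (σ2 : Fin M → ℝ)
    (hL2 : ∀ m z, MemLp (fun ω => G z (ξ m ω)) 2 P)
    (hunbiased : ∀ m z, ∫ ω, G z (ξ m ω) ∂P = gradient (f m) z)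
    (hvar : ∀ m z, ∫ ω, ‖G z (ξ m ω) - gradient (f m) z‖ ^ 2 ∂P ≤ σ2 m) :
    ∫ ω, ‖(M : ℝ)⁻¹ • ∑ m, G (x m) (ξ m ω)‖ ^ 2 ∂P
      ≤ 10 / (M : ℝ) ^ 2 * ∑ m, σ2 m + 2 * L ^ 2 * V
        + 4 * L * (F xbar - F xbarstar) := by
  have hindG : Pairwise fun m n =>
      IndepFun (fun ω => G (x m) (ξ m ω)) (fun ω => G (x n) (ξ n ω)) P :=
    fun m n hmn => (hindep.indepFun hmn).comp (hG.comp measurable_prodMk_left)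
      (hG.comp measurable_prodMk_left)
  have hsecond := integral_norm_sum_sq_eq_sum_integral_norm_sub_sq_add (fun m => hL2 m (x m)) hindG
  simp only [hunbiased] at hsecond
  have hdet := norm_average_gradient_sq_le (K := L.toNNReal) (Real.toNNReal_pos.2 hL) hdiff
    hsmooth (by simpa using hF) hmin x xbar
  simp only [Fintype.card_fin, Real.coe_toNNReal _ hL.le, ← hV] at hdet
  have hσ : 0 ≤ ∑ m, σ2 m :=
    sum_nonneg fun m _ => (integral_nonneg fun _ => by positivity).trans (hvar m (x m))
  calc ∫ ω, ‖(M : ℝ)⁻¹ • ∑ m, G (x m) (ξ m ω)‖ ^ 2 ∂P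
      = (M : ℝ)⁻¹ ^ 2 * ∑ m, ∫ ω, ‖G (x m) (ξ m ω) - gradient (f m) (x m)‖ ^ 2 ∂P
        + ‖(M : ℝ)⁻¹ • ∑ m, gradient (f m) (x m)‖ ^ 2 := by
        simp_rw [norm_smul, norm_inv, RCLike.norm_natCast, mul_pow, integral_const_mul,
          hsecond]
        ring
    _ ≤ (M : ℝ)⁻¹ ^ 2 * ∑ m, σ2 m + (2 * L ^ 2 * V + 4 * L * (F xbar - F xbarstar)) := by
        gcongr with m
        exact hvar m (x m)
    _ ≤ _ := by
        have hM : (M : ℝ)⁻¹ ^ 2 ≤ 10 / (M : ℝ) ^ 2 := by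
          rw [inv_pow, ← one_div]
          gcongr
          norm_num
        linarith [mul_le_mul_of_nonneg_right hM hσ]

/-- **Progress per iteration** (Lemma 2 of the paper). For `L`-smooth local losses with average
`F` minimized at `x̄*`, points `x₁,…,x_M` with average `x̄` and consensus error `V`, and
independent unbiased stochastic gradients with variance bounds `σₘ²`:
`E‖(1/M)∑ₘ G(xₘ, ξₘ)‖² ≤ (10/M²)∑ₘ σₘ² + 2L²V + 4L(F(x̄) - F(x̄*))`. -/
theorem progress_per_iteration
    {d M : ℕ} (hM : 1 ≤ M)
    {Ω : Type} [MeasurableSpace Ω] (P : Measure Ω) [IsProbabilityMeasure P]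
    {S : Type} [MeasurableSpace S]
    (L : ℝ) (hL : 0 < L)
    (f : Fin M → EuclideanSpace ℝ (Fin d) → ℝ)
    (hdiff : ∀ m, Differentiable ℝ (f m))
    (hsmooth : ∀ m, LipschitzWith L.toNNReal (gradient (f m)))
    (F : EuclideanSpace ℝ (Fin d) → ℝ)
    (hF : ∀ z, F z = (M : ℝ)⁻¹ * ∑ m, f m z)
    (xbarstar : EuclideanSpace ℝ (Fin d)) (hmin : ∀ y, F xbarstar ≤ F y)
    (x : Fin M → EuclideanSpace ℝ (Fin d))
    (xbar : EuclideanSpace ℝ (Fin d)) (hxbar : xbar = (M : ℝ)⁻¹ • ∑ m, x m)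
    (V : ℝ) (hV : V = (M : ℝ)⁻¹ * ∑ m, ‖x m - xbar‖ ^ 2)
    (ξ : Fin M → Ω → S)
    (hmeas : ∀ m, Measurable (ξ m))
    (hindep : iIndepFun ξ P)
    (G : EuclideanSpace ℝ (Fin d) → S → EuclideanSpace ℝ (Fin d))
    (hG : Measurable (Function.uncurry G))
    (σ2 : Fin M → ℝ)
    (hL2 : ∀ m z, MemLp (fun ω => G z (ξ m ω)) 2 P)
    (hunbiased : ∀ m z, ∫ ω, G z (ξ m ω) ∂P = gradient (f m) z)
    (hvar : ∀ m z, ∫ ω, ‖G z (ξ m ω) - gradient (f m) z‖ ^ 2 ∂P ≤ σ2 m) :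
    ∫ ω, ‖(M : ℝ)⁻¹ • ∑ m, G (x m) (ξ m ω)‖ ^ 2 ∂P
      ≤ 10 / (M : ℝ) ^ 2 * ∑ m, σ2 m + 2 * L ^ 2 * V
        + 4 * L * (F xbar - F xbarstar) :=
  progress_per_iteration_general P L hL f hdiff hsmooth F hF xbarstar hmin x xbar V hV ξ hindep G hG
    σ2 hL2 hunbiased hvar
end

section
/- (Convex inner-product lower bound.) Let f_1,…,f_M : ℝ^d → ℝ each be convex and L-smooth with average f = (1/M)∑_{m=1}^M f_m. Then for any points x_1,…,x_M ∈ ℝ^d with average x̄ = (1/M)∑_m x_m and consensus error V = (1/M)∑_m ‖x_m − x̄‖², and any x^* ∈ ℝ^d: (1/M)∑_{m=1}^M ⟨∇f_m(x_m), x̄ − x^*⟩ ≥ f(x̄) − f(x^*) − (L/2)·V. -/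
open Finset
open scoped RealInnerProductSpace NNReal

/-!
Fix `m`. Convexity of `fₘ` at `xₘ` bounds `fₘ(x*)` from below by the tangent plane at `xₘ`, and
`L`-smoothness bounds `fₘ(x̄)` from above by the same tangent plane plus `(L/2)‖xₘ - x̄‖²`.
Subtracting, `fₘ(x̄) - fₘ(x*) - (L/2)‖xₘ - x̄‖² ≤ ⟪∇fₘ(xₘ), x̄ - x*⟫`; averaging over `m` gives
the claim. Both one-point bounds are proved on the line through the two points.
-/

section FirstOrder

variable {E : Type*} [NormedAddCommGroup E] [InnerProductSpace ℝ E] [CompleteSpace E]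
  {g : E → ℝ}

theorem DifferentiableAt.hasDerivAt_comp_add_smul {p v : E} {t : ℝ}
    (hg : DifferentiableAt ℝ g (p + t • v)) :
    HasDerivAt (fun s : ℝ => g (p + s • v)) ⟪gradient g (p + t • v), v⟫ t := by
  have hline : HasDerivAt (fun s : ℝ => p + s • v) v t := by
    simpa using ((hasDerivAt_id t).smul_const v).const_add p
  exact (hasGradientAt_iff_hasFDerivAt.mp hg.hasGradientAt).comp_hasDerivAt t hline

theorem ConvexOn.add_inner_gradient_le (hc : ConvexOn ℝ Set.univ g) {a : E}
    (hg : DifferentiableAt ℝ g a) (b : E) :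
    g a + ⟪gradient g a, b - a⟫ ≤ g b := by
  let φ : ℝ → ℝ := fun s => g (a + s • (b - a))
  have hφ : ConvexOn ℝ Set.univ φ := by
    simpa [φ, Function.comp_def] using hc.comp_affineMap
      (AffineMap.const ℝ ℝ a + (LinearMap.toSpanSingleton ℝ E (b - a)).toAffineMap)
  have hφ' : HasDerivAt φ ⟪gradient g a, b - a⟫ 0 := by
    simpa [φ] using (show DifferentiableAt ℝ g (a + (0 : ℝ) • (b - a)) by simpa using hg)
      |>.hasDerivAt_comp_add_smul
  have hslope := hφ.le_slope_of_hasDerivAt (Set.mem_univ 0) (Set.mem_univ 1) one_pos hφ'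
  have hφ01 : slope φ 0 1 = g b - g a := by simp [slope_def_field, φ]
  linarith

theorem LipschitzWith.inner_gradient_add_smul_sub_le {K : ℝ≥0}
    (hlip : LipschitzWith K (gradient g)) (a v : E) {t : ℝ} (ht : 0 ≤ t) :
    ⟪gradient g (a + t • v) - gradient g a, v⟫ ≤ K * t * ‖v‖ ^ 2 := by
  have hdist : ‖gradient g (a + t • v) - gradient g a‖ ≤ K * (t * ‖v‖) := by
    simpa [dist_eq_norm, norm_smul, abs_of_nonneg ht] using hlip.dist_le_mul (a + t • v) a
  calc ⟪gradient g (a + t • v) - gradient g a, v⟫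
      ≤ ‖gradient g (a + t • v) - gradient g a‖ * ‖v‖ := real_inner_le_norm _ _
    _ ≤ K * (t * ‖v‖) * ‖v‖ := by gcongr
    _ = K * t * ‖v‖ ^ 2 := by ring

theorem LipschitzWith.le_add_inner_gradient_add_sq {K : ℝ≥0}
    (hlip : LipschitzWith K (gradient g)) (hg : Differentiable ℝ g) (a b : E) :
    g b ≤ g a + ⟪gradient g a, b - a⟫ + K / 2 * ‖b - a‖ ^ 2 := by
  set v := b - a
  -- `ψ` is the gap between the quadratic upper model and `g` along `s ↦ a + s • v`.
  let ψ : ℝ → ℝ := fun s => g (a + s • v) - s * ⟪gradient g a, v⟫ - K / 2 * s ^ 2 * ‖v‖ ^ 2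
  have hψ' : ∀ t : ℝ, HasDerivAt ψ
      (⟪gradient g (a + t • v), v⟫ - ⟪gradient g a, v⟫ - K * t * ‖v‖ ^ 2) t := by
    intro t
    have hquad : HasDerivAt (fun s : ℝ => K / 2 * s ^ 2 * ‖v‖ ^ 2) (K * t * ‖v‖ ^ 2) t :=
      (((hasDerivAt_pow 2 t).const_mul ((K : ℝ) / 2)).mul_const _).congr_deriv (by ring)
    exact (((hg _).hasDerivAt_comp_add_smul).sub
      ((hasDerivAt_id t).mul_const _)).sub hquad |>.congr_deriv (by simp)
  have hanti : AntitoneOn ψ (Set.Icc 0 1) := by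
    refine antitoneOn_of_deriv_nonpos (convex_Icc 0 1)
      (fun t _ => (hψ' t).continuousAt.continuousWithinAt)
      (fun t _ => (hψ' t).differentiableAt.differentiableWithinAt) fun t ht => ?_
    rw [interior_Icc] at ht
    have := hlip.inner_gradient_add_smul_sub_le a v ht.1.le
    rw [inner_sub_left] at this
    rw [(hψ' t).deriv]
    linarith
  have hψ01 := hanti (Set.left_mem_Icc.2 zero_le_one) (Set.right_mem_Icc.2 zero_le_one)
    zero_le_one
  have hab : a + v = b := add_sub_cancel a b
  simp only [ψ, zero_smul, add_zero, one_smul, hab] at hψ01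
  linarith

theorem ConvexOn.sub_sub_sq_le_inner_gradient {K : ℝ≥0} (hc : ConvexOn ℝ Set.univ g)
    (hg : Differentiable ℝ g) (hlip : LipschitzWith K (gradient g)) (a b c : E) :
    g b - g c - K / 2 * ‖a - b‖ ^ 2 ≤ ⟪gradient g a, b - c⟫ := by
  have hlower := hc.add_inner_gradient_le (hg a) c
  have hupper := hlip.le_add_inner_gradient_add_sq hg a b
  have hsplit : ⟪gradient g a, b - c⟫ = ⟪gradient g a, b - a⟫ - ⟪gradient g a, c - a⟫ := by
    rw [← inner_sub_right, sub_sub_sub_cancel_right]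
  rw [hsplit, norm_sub_rev]
  linarith

end FirstOrder

theorem convex_inner_product_lower_bound_general
    {d M : ℕ} (L : ℝ) (hL : 0 < L)
    (f : Fin M → EuclideanSpace ℝ (Fin d) → ℝ)
    (hdiff : ∀ m, Differentiable ℝ (f m))
    (hconv : ∀ m, ConvexOn ℝ Set.univ (f m))
    (hsmooth : ∀ m, LipschitzWith L.toNNReal (gradient (f m)))
    (F : EuclideanSpace ℝ (Fin d) → ℝ)
    (hF : ∀ z, F z = (M : ℝ)⁻¹ * ∑ m, f m z)
    (x : Fin M → EuclideanSpace ℝ (Fin d))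
    (xbar : EuclideanSpace ℝ (Fin d))
    (V : ℝ) (hV : V = (M : ℝ)⁻¹ * ∑ m, ‖x m - xbar‖ ^ 2)
    (xstar : EuclideanSpace ℝ (Fin d)) :
    F xbar - F xstar - L / 2 * V
      ≤ (M : ℝ)⁻¹ * ∑ m, ⟪gradient (f m) (x m), xbar - xstar⟫ := by
  have hkey m : f m xbar - f m xstar - L / 2 * ‖x m - xbar‖ ^ 2
      ≤ ⟪gradient (f m) (x m), xbar - xstar⟫ := by
    simpa [Real.coe_toNNReal L hL.le] using
      (hconv m).sub_sub_sq_le_inner_gradient (hdiff m) (hsmooth m) (x m) xbar xstar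
  calc F xbar - F xstar - L / 2 * V
      = (M : ℝ)⁻¹ * ∑ m, (f m xbar - f m xstar - L / 2 * ‖x m - xbar‖ ^ 2) := by
        rw [hF, hF, hV, sum_sub_distrib, sum_sub_distrib, ← mul_sum]
        ring
    _ ≤ (M : ℝ)⁻¹ * ∑ m, ⟪gradient (f m) (x m), xbar - xstar⟫ := by
        gcongr with m
        exact hkey m

/-- **Convex inner-product lower bound.** For convex `L`-smooth local losses `f₁,…,f_M` with
average `F`, points `x₁,…,x_M` with average `x̄` and consensus error `V`, and any `x*`:
`(1/M)∑ₘ ⟪∇fₘ(xₘ), x̄ - x*⟫ ≥ F(x̄) - F(x*) - (L/2)V`. -/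
theorem convex_inner_product_lower_bound
    {d M : ℕ} (hM : 1 ≤ M) (L : ℝ) (hL : 0 < L)
    (f : Fin M → EuclideanSpace ℝ (Fin d) → ℝ)
    (hdiff : ∀ m, Differentiable ℝ (f m))
    (hconv : ∀ m, ConvexOn ℝ Set.univ (f m))
    (hsmooth : ∀ m, LipschitzWith L.toNNReal (gradient (f m)))
    (F : EuclideanSpace ℝ (Fin d) → ℝ)
    (hF : ∀ z, F z = (M : ℝ)⁻¹ * ∑ m, f m z)
    (x : Fin M → EuclideanSpace ℝ (Fin d))
    (xbar : EuclideanSpace ℝ (Fin d)) (hxbar : xbar = (M : ℝ)⁻¹ • ∑ m, x m)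
    (V : ℝ) (hV : V = (M : ℝ)⁻¹ * ∑ m, ‖x m - xbar‖ ^ 2)
    (xstar : EuclideanSpace ℝ (Fin d)) :
    F xbar - F xstar - L / 2 * V
      ≤ (M : ℝ)⁻¹ * ∑ m, ⟪gradient (f m) (x m), xbar - xstar⟫ :=
  convex_inner_product_lower_bound_general L hL f hdiff hconv hsmooth F hF x xbar V hV xstar
end

section
/- (Strongly convex inner-product bound via Young's inequality.) Let f_1,…,f_M : ℝ^d → ℝ each be μ-strongly convex and L-smooth with average f = (1/M)∑_{m=1}^M f_m. Then for any points x_1,…,x_M ∈ ℝ^d with average x̄ = (1/M)∑_m x_m and consensus error V = (1/M)∑_m ‖x_m − x̄‖², any x^* ∈ ℝ^d, any η > 0 and any β > 0: −(2η/M)∑_{m=1}^M ⟨∇f_m(x_m), x̄ − x^*⟩ ≤ η(β − μ)‖x̄ − x^*‖² + (ηL²/β)·V − 2η·(f(x̄) − f(x^*)). -/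
open Finset
open scoped RealInnerProductSpace

/-!
Split `∇fₘ(xₘ) = ∇fₘ(x̄) - (∇fₘ(x̄) - ∇fₘ(xₘ))`. The first-order characterisation of strong
convexity at `x̄` bounds `-⟪∇fₘ(x̄), x̄ - x*⟫` by `fₘ(x*) - fₘ(x̄) - (μ/2)‖x̄ - x*‖²`, and Young's
inequality with parameter `β`, followed by `L`-smoothness, bounds the remaining inner product by
`(L²/2β)‖xₘ - x̄‖² + (β/2)‖x̄ - x*‖²`. Averaging over `m` gives the claim.
-/

theorem Real.coe_toNNReal_sq_le (r : ℝ) : (r.toNNReal : ℝ) ^ 2 ≤ r ^ 2 := by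
  rw [Real.coe_toNNReal', ← sq_abs r]
  gcongr
  exact max_le (le_abs_self r) (abs_nonneg r)

theorem ConvexOn.add_le_of_hasFDerivAt {E : Type*} [NormedAddCommGroup E] [NormedSpace ℝ E]
    {s : Set E} {g : E → ℝ} {g' : E →L[ℝ] ℝ} {x y : E} (hg : ConvexOn ℝ s g) (hx : x ∈ s)
    (hy : y ∈ s) (hg' : HasFDerivAt g g' x) :
    g x + g' (y - x) ≤ g y := by
  have hline : ConvexOn ℝ (AffineMap.lineMap (k := ℝ) x y ⁻¹' s) (g ∘ AffineMap.lineMap x y) :=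
    hg.comp_affineMap _
  have hderiv : HasDerivAt (g ∘ AffineMap.lineMap (k := ℝ) x y) (g' (y - x)) 0 :=
    (AffineMap.lineMap_apply_zero (k := ℝ) x y ▸ hg').comp_hasDerivAt 0
      AffineMap.hasDerivAt_lineMap
  have hslope := hline.le_slope_of_hasDerivAt (by simpa using hx) (by simpa using hy)
    zero_lt_one hderiv
  simp only [slope_def_field, Function.comp_apply, AffineMap.lineMap_apply_zero,
    AffineMap.lineMap_apply_one, sub_zero, div_one] at hslope
  linarith

theorem StrongConvexOn.add_inner_add_le_of_hasGradientAt {E : Type*} [NormedAddCommGroup E]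
    [InnerProductSpace ℝ E] [CompleteSpace E] {s : Set E} {μ : ℝ} {f : E → ℝ} {f' x y : E}
    (hf : StrongConvexOn s μ f) (hx : x ∈ s) (hy : y ∈ s) (hf' : HasGradientAt f f' x) :
    f x + ⟪f', y - x⟫ + μ / 2 * ‖y - x‖ ^ 2 ≤ f y := by
  have hnorm : HasFDerivAt (fun z : E => μ / 2 * ‖z‖ ^ 2) ((μ / 2) • 2 • innerSL ℝ x) x :=
    (hasStrictFDerivAt_norm_sq x).hasFDerivAt.const_mul (μ / 2)
  have hconvex := (strongConvexOn_iff_convex.mp hf).add_le_of_hasFDerivAt hx hy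
    (hf'.hasFDerivAt.sub hnorm)
  simp only [sub_apply, smul_apply, InnerProductSpace.toDual_apply_apply, innerSL_apply_apply,
    smul_eq_mul, nsmul_eq_mul, Nat.cast_ofNat, inner_sub_right, real_inner_self_eq_norm_sq]
    at hconvex
  rw [norm_sub_sq_real, inner_sub_right, real_inner_comm x y]
  linarith

theorem real_inner_le_norm_sq_div_add {E : Type*} [NormedAddCommGroup E] [InnerProductSpace ℝ E]
    (a b : E) {β : ℝ} (hβ : 0 < β) :
    ⟪a, b⟫ ≤ ‖a‖ ^ 2 / (2 * β) + β / 2 * ‖b‖ ^ 2 := by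
  have hyoung : 2 * ‖a‖ * (β * ‖b‖) ≤ ‖a‖ ^ 2 + (β * ‖b‖) ^ 2 := two_mul_le_add_sq _ _
  calc ⟪a, b⟫ ≤ ‖a‖ * ‖b‖ := real_inner_le_norm a b
    _ = 2 * ‖a‖ * (β * ‖b‖) / (2 * β) := by field_simp
    _ ≤ (‖a‖ ^ 2 + (β * ‖b‖) ^ 2) / (2 * β) := by gcongr
    _ = ‖a‖ ^ 2 / (2 * β) + β / 2 * ‖b‖ ^ 2 := by field_simp

theorem StrongConvexOn.neg_inner_gradient_le {E : Type*} [NormedAddCommGroup E]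
    [InnerProductSpace ℝ E] [CompleteSpace E] {s : Set E} {μ β : ℝ} {K : NNReal} {f : E → ℝ}
    {x y z : E} (hf : StrongConvexOn s μ f) (hsmooth : LipschitzWith K (gradient f))
    (hfy : DifferentiableAt ℝ f y) (hy : y ∈ s) (hz : z ∈ s) (hβ : 0 < β) :
    -⟪gradient f x, y - z⟫
      ≤ f z - f y + (β - μ) / 2 * ‖y - z‖ ^ 2 + K ^ 2 / (2 * β) * ‖x - y‖ ^ 2 := by
  have hconvex := hf.add_inner_add_le_of_hasGradientAt hy hz hfy.hasGradientAt
  have hyoung := real_inner_le_norm_sq_div_add (gradient f y - gradient f x) (y - z) hβ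
  have hlip : ‖gradient f y - gradient f x‖ ^ 2 / (2 * β) ≤ K ^ 2 / (2 * β) * ‖x - y‖ ^ 2 := by
    rw [div_mul_eq_mul_div, ← mul_pow, ← dist_eq_norm, ← dist_eq_norm, dist_comm x]
    gcongr
    exact hsmooth.dist_le_mul y x
  have hsplit : -⟪gradient f x, y - z⟫
      = ⟪gradient f y, z - y⟫ + ⟪gradient f y - gradient f x, y - z⟫ := by
    rw [← neg_sub y z, inner_neg_right, inner_sub_left]; ring
  rw [norm_sub_rev z y] at hconvex
  linarith

theorem strongly_convex_inner_product_bound_general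
    {d M : ℕ} (hM : 1 ≤ M) (L μ : ℝ)
    (f : Fin M → EuclideanSpace ℝ (Fin d) → ℝ)
    (hdiff : ∀ m, Differentiable ℝ (f m))
    (hsconv : ∀ m, StrongConvexOn Set.univ μ (f m))
    (hsmooth : ∀ m, LipschitzWith L.toNNReal (gradient (f m)))
    (F : EuclideanSpace ℝ (Fin d) → ℝ)
    (hF : ∀ z, F z = (M : ℝ)⁻¹ * ∑ m, f m z)
    (x : Fin M → EuclideanSpace ℝ (Fin d))
    (xbar : EuclideanSpace ℝ (Fin d))
    (V : ℝ) (hV : V = (M : ℝ)⁻¹ * ∑ m, ‖x m - xbar‖ ^ 2)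
    (xstar : EuclideanSpace ℝ (Fin d))
    (η β : ℝ) (hη : 0 < η) (hβ : 0 < β) :
    -(2 * η / M) * ∑ m, ⟪gradient (f m) (x m), xbar - xstar⟫
      ≤ η * (β - μ) * ‖xbar - xstar‖ ^ 2 + η * L ^ 2 / β * V
        - 2 * η * (F xbar - F xstar) := by
  have hM0 : (M : ℝ) ≠ 0 := by positivity
  have hterm m : -⟪gradient (f m) (x m), xbar - xstar⟫
      ≤ f m xstar - f m xbar + (β - μ) / 2 * ‖xbar - xstar‖ ^ 2
        + L ^ 2 / (2 * β) * ‖x m - xbar‖ ^ 2 := by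
    have hsmooth_sq : (L.toNNReal : ℝ) ^ 2 / (2 * β) * ‖x m - xbar‖ ^ 2
        ≤ L ^ 2 / (2 * β) * ‖x m - xbar‖ ^ 2 := by
      gcongr ?_ / _ * _; exact Real.coe_toNNReal_sq_le L
    have hbound := (hsconv m).neg_inner_gradient_le (x := x m) (hsmooth m) (hdiff m xbar)
      (Set.mem_univ xbar) (Set.mem_univ xstar) hβ
    linarith
  have havg : (M : ℝ)⁻¹ * ∑ m, -⟪gradient (f m) (x m), xbar - xstar⟫
      ≤ F xstar - F xbar + (β - μ) / 2 * ‖xbar - xstar‖ ^ 2 + L ^ 2 / (2 * β) * V := by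
    calc (M : ℝ)⁻¹ * ∑ m, -⟪gradient (f m) (x m), xbar - xstar⟫
        ≤ (M : ℝ)⁻¹ * ∑ m, (f m xstar - f m xbar + (β - μ) / 2 * ‖xbar - xstar‖ ^ 2
            + L ^ 2 / (2 * β) * ‖x m - xbar‖ ^ 2) := by gcongr with m; exact hterm m
      _ = F xstar - F xbar + (β - μ) / 2 * ‖xbar - xstar‖ ^ 2 + L ^ 2 / (2 * β) * V := by
        simp only [sum_add_distrib, sum_sub_distrib, sum_const, card_univ, Fintype.card_fin,
          nsmul_eq_mul, ← mul_sum, hF, hV]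
        field_simp
  calc -(2 * η / M) * ∑ m, ⟪gradient (f m) (x m), xbar - xstar⟫
      = 2 * η * ((M : ℝ)⁻¹ * ∑ m, -⟪gradient (f m) (x m), xbar - xstar⟫) := by
        rw [sum_neg_distrib]; ring
    _ ≤ 2 * η * (F xstar - F xbar + (β - μ) / 2 * ‖xbar - xstar‖ ^ 2 + L ^ 2 / (2 * β) * V) := by
        gcongr
    _ = η * (β - μ) * ‖xbar - xstar‖ ^ 2 + η * L ^ 2 / β * V - 2 * η * (F xbar - F xstar) := by
        ring

/-- **Strongly convex inner-product bound via Young's inequality.** For `μ`-strongly convex,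
`L`-smooth local losses `f₁,…,f_M` with average `F`, points `x₁,…,x_M` with average `x̄` and
consensus error `V`, any `x*`, any `η > 0` and any `β > 0`:
`-(2η/M)∑ₘ ⟪∇fₘ(xₘ), x̄ - x*⟫ ≤ η(β-μ)‖x̄-x*‖² + (ηL²/β)V - 2η(F(x̄) - F(x*))`. -/
theorem strongly_convex_inner_product_bound
    {d M : ℕ} (hM : 1 ≤ M) (L μ : ℝ) (hL : 0 < L) (hμ : 0 < μ)
    (f : Fin M → EuclideanSpace ℝ (Fin d) → ℝ)
    (hdiff : ∀ m, Differentiable ℝ (f m))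
    (hsconv : ∀ m, StrongConvexOn Set.univ μ (f m))
    (hsmooth : ∀ m, LipschitzWith L.toNNReal (gradient (f m)))
    (F : EuclideanSpace ℝ (Fin d) → ℝ)
    (hF : ∀ z, F z = (M : ℝ)⁻¹ * ∑ m, f m z)
    (x : Fin M → EuclideanSpace ℝ (Fin d))
    (xbar : EuclideanSpace ℝ (Fin d)) (hxbar : xbar = (M : ℝ)⁻¹ • ∑ m, x m)
    (V : ℝ) (hV : V = (M : ℝ)⁻¹ * ∑ m, ‖x m - xbar‖ ^ 2)
    (xstar : EuclideanSpace ℝ (Fin d))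
    (η β : ℝ) (hη : 0 < η) (hβ : 0 < β) :
    -(2 * η / M) * ∑ m, ⟪gradient (f m) (x m), xbar - xstar⟫
      ≤ η * (β - μ) * ‖xbar - xstar‖ ^ 2 + η * L ^ 2 / β * V
        - 2 * η * (F xbar - F xstar) :=
  strongly_convex_inner_product_bound_general hM L μ f hdiff hsconv hsmooth F hF x xbar V hV xstar η
    β hη hβ
end
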